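/- Let q : ℝ^{2d} → ℂ be a quadratic form with Hamilton map F such that Re q(X) ≥ 0 for all X and with trivial singular space S = {0}, and extend q to the holomorphic quadratic polynomial on ℂ^{2d}. Fix T > 0, let G(X) = ∫₀^T (1 − t/T)·Re q(exp(2t·Im F)X) dt, and let H_G = 2F_G denote twice the Hamilton map of the real quadratic form G. Then there exists δ₀ > 0 such that for every 0 < δ ≤ δ₀ and every X ∈ ℝ^{2d} \ {0}: Re q(X + iδ·H_G X) > 0. -/

import Mathlib

/-!
Write `q_r = Re q`, `M = Im F` and `r(u) = q_r(exp(uM) X)`. As `A` is symmetric,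
`Re q(X + iδ H_G X) = q_r(X) + 4δ ⟨M X, A_G X⟩ - δ² q_r(H_G X)`.
Computing the derivative of `s ↦ G(exp(sM) X)` at `s = 0` in two ways, directly and after the
substitution `u = 2t + s` in the integral defining `G`, gives
`q_r(X) + 4 ⟨M X, A_G X⟩ = (2T)⁻¹ ∫₀^{2T} r`. This is positive for `X ≠ 0`: otherwise
`Re A exp(uM) X = 0` on `[0, 2T]`, and differentiating in `u` puts `exp(uM) X` in the kernel of
every `Re F (Im F)^k`, so `X = 0` as `S = {0}`. A positive definite form dominates
`δ q_r(H_G X)` for small `δ`, and `(1 - δ) q_r(X) ≥ 0`.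
-/

open Matrix

noncomputable section

/-- The standard symplectic matrix `J = [[0, -I], [I, 0]]` on `R^d ⊕ R^d`. -/
def Jmat (d : ℕ) (R : Type*) [Ring R] :
    Matrix (Fin d ⊕ Fin d) (Fin d ⊕ Fin d) R :=
  Matrix.fromBlocks 0 (-1) 1 0

/-- The complex quadratic form `X ↦ ⟨X, A X⟩` evaluated on a real vector `X ∈ ℝ^{2d}`. -/
def Qc {d : ℕ} (A : Matrix (Fin d ⊕ Fin d) (Fin d ⊕ Fin d) ℂ)
    (X : Fin d ⊕ Fin d → ℝ) : ℂ :=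
  (fun i => (X i : ℂ)) ⬝ᵥ A *ᵥ (fun i => (X i : ℂ))

section WeightedAverage

variable {r : ℝ → ℝ}

theorem hasDerivAt_integral_shift (hr : Continuous r) (c s : ℝ) :
    HasDerivAt (fun s => ∫ u in s..c + s, r u) (r (c + s) - r s) s := by
  have hsub : (fun s => ∫ u in s..c + s, r u)
      = fun s => (∫ u in (0 : ℝ)..c + s, r u) - ∫ u in (0 : ℝ)..s, r u := by
    funext s
    rw [intervalIntegral.integral_interval_sub_left (hr.intervalIntegrable _ _)
      (hr.intervalIntegrable _ _)]
  rw [hsub]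
  exact ((hr.integral_hasStrictDerivAt 0 (c + s)).hasDerivAt.comp s
    ((hasDerivAt_id s).const_add c)).sub (hr.integral_hasStrictDerivAt 0 s).hasDerivAt
    |>.congr_deriv (by simp)

/-- Substituting `u = 2t + s` turns the weight `1 - t/T` into `(2T + s - u) / 2T`. -/
theorem integral_one_sub_div_mul_comp_two_mul_add (hr : Continuous r) {T : ℝ} (hT : T ≠ 0)
    (s : ℝ) :
    ∫ t in (0 : ℝ)..T, (1 - t / T) * r (2 * t + s)
      = ((2 * T + s) * (∫ u in s..2 * T + s, r u) - ∫ u in s..2 * T + s, u * r u) / (4 * T) := by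
  have hweight : ∀ t, (1 - t / T) * r (2 * t + s)
      = (fun u => ((2 * T + s) * r u - u * r u) / (2 * T)) (2 * t + s) := by
    intro t; field_simp; ring
  rw [intervalIntegral.integral_congr fun t _ => hweight t,
    intervalIntegral.integral_comp_mul_add (fun u => ((2 * T + s) * r u - u * r u) / (2 * T))
      two_ne_zero, intervalIntegral.integral_div,
    intervalIntegral.integral_sub ((hr.intervalIntegrable _ _).const_mul _)
      ((by fun_prop : Continuous fun u => u * r u).intervalIntegrable _ _),
    intervalIntegral.integral_const_mul]
  simp only [mul_zero, zero_add, smul_eq_mul]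
  field_simp
  ring

theorem hasDerivAt_integral_one_sub_div_mul_comp_two_mul_add (hr : Continuous r) {T : ℝ}
    (hT : T ≠ 0) :
    HasDerivAt (fun s => ∫ t in (0 : ℝ)..T, (1 - t / T) * r (2 * t + s))
      ((∫ u in (0 : ℝ)..2 * T, r u) / (4 * T) - r 0 / 2) 0 := by
  simp_rw [integral_one_sub_div_mul_comp_two_mul_add hr hT]
  have hr' : Continuous fun u => u * r u := by fun_prop
  refine ((((hasDerivAt_id' (0 : ℝ)).const_add (2 * T)).fun_mul
    (hasDerivAt_integral_shift hr (2 * T) 0)).fun_sub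
    (hasDerivAt_integral_shift hr' (2 * T) 0) |>.div_const (4 * T)).congr_deriv ?_
  simp only [add_zero, zero_mul, sub_zero, one_mul]
  field_simp
  ring

end WeightedAverage

variable {m : Type*} [Fintype m]

theorem Matrix.IsSymm.dotProduct_mulVec_comm {R : Type*} [CommSemiring R] {B : Matrix m m R}
    (hB : B.IsSymm) (x y : m → R) : x ⬝ᵥ B *ᵥ y = y ⬝ᵥ B *ᵥ x := by
  rw [dotProduct_mulVec, ← mulVec_transpose, hB.eq, dotProduct_comm]

theorem dotProduct_mulVec_mul_mulVec_of_transpose_eq_neg {R : Type*} [CommRing R]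
    {M S : Matrix m m R} (hM : Mᵀ = -M) (hS : S.IsSymm) (G : Matrix m m R) (x : m → R) :
    x ⬝ᵥ S *ᵥ ((M * G) *ᵥ x) = -(((M * S) *ᵥ x) ⬝ᵥ G *ᵥ x) := by
  calc x ⬝ᵥ S *ᵥ ((M * G) *ᵥ x) = (G *ᵥ x) ⬝ᵥ Mᵀ *ᵥ (S *ᵥ x) := by
        rw [hS.dotProduct_mulVec_comm, ← mulVec_mulVec, dotProduct_mulVec (G *ᵥ x),
          vecMul_transpose]
    _ = -(((M * S) *ᵥ x) ⬝ᵥ G *ᵥ x) := by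
        rw [hM, neg_mulVec, dotProduct_neg, mulVec_mulVec, dotProduct_comm]

theorem dotProduct_transpose_mul_mulVec {R : Type*} [CommSemiring R] (M N : Matrix m m R)
    (x y : m → R) : x ⬝ᵥ (Mᵀ * N) *ᵥ y = (M *ᵥ x) ⬝ᵥ N *ᵥ y := by
  rw [← mulVec_mulVec, dotProduct_mulVec, vecMul_transpose]

theorem smul_dotProduct_mulVec_smul (P : Matrix m m ℝ) (a : ℝ) (x : m → ℝ) :
    (a • x) ⬝ᵥ P *ᵥ (a • x) = a ^ 2 * (x ⬝ᵥ P *ᵥ x) := by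
  simp only [mulVec_smul, smul_dotProduct, dotProduct_smul, smul_eq_mul]
  ring

theorem exists_pos_forall_smul_dotProduct_mulVec_lt {P : Matrix m m ℝ}
    (hP : ∀ x ≠ 0, 0 < x ⬝ᵥ P *ᵥ x) (Q : Matrix m m ℝ) :
    ∃ δ₀ > 0, ∀ δ, 0 ≤ δ → δ ≤ δ₀ → ∀ x ≠ 0, δ * (x ⬝ᵥ Q *ᵥ x) < x ⬝ᵥ P *ᵥ x := by
  rcases isEmpty_or_nonempty m with hm | hm
  · exact ⟨1, one_pos, fun δ _ _ x hx => absurd (Subsingleton.elim x 0) hx⟩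
  have hquad (B : Matrix m m ℝ) : Continuous fun x : m → ℝ => x ⬝ᵥ B *ᵥ x := by fun_prop
  have hS := isCompact_sphere (0 : m → ℝ) 1
  obtain ⟨x₀, hx₀, hmin⟩ := hS.exists_isMinOn (NormedSpace.sphere_nonempty.2 zero_le_one)
    (hquad P).continuousOn
  obtain ⟨C, hC⟩ := hS.exists_bound_of_continuousOn (hquad Q).continuousOn
  have hc : 0 < x₀ ⬝ᵥ P *ᵥ x₀ := hP x₀ (ne_zero_of_mem_unit_sphere ⟨x₀, hx₀⟩)
  refine ⟨(x₀ ⬝ᵥ P *ᵥ x₀) / (|C| + 1), by positivity, fun δ hδ hδ₀ x hx => ?_⟩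
  obtain ⟨a, ha, u, hu, rfl⟩ : ∃ a : ℝ, 0 < a ∧ ∃ u ∈ Metric.sphere (0 : m → ℝ) 1, x = a • u := by
    have hnorm : 0 < ‖x‖ := norm_pos_iff.2 hx
    exact ⟨‖x‖, hnorm, ‖x‖⁻¹ • x, by simp [norm_smul, hnorm.ne'], by simp [smul_smul, hnorm.ne']⟩
  have hQu : u ⬝ᵥ Q *ᵥ u ≤ |C| :=
    (le_abs_self _).trans ((Real.norm_eq_abs _ ▸ hC u hu).trans (le_abs_self C))
  have hδC : δ * |C| < x₀ ⬝ᵥ P *ᵥ x₀ := by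
    calc δ * |C| ≤ (x₀ ⬝ᵥ P *ᵥ x₀) / (|C| + 1) * |C| := by gcongr
      _ < (x₀ ⬝ᵥ P *ᵥ x₀) / (|C| + 1) * (|C| + 1) := by gcongr; linarith
      _ = x₀ ⬝ᵥ P *ᵥ x₀ := by field_simp
  rw [smul_dotProduct_mulVec_smul, smul_dotProduct_mulVec_smul, mul_left_comm]
  refine mul_lt_mul_of_pos_left ?_ (by positivity)
  calc δ * (u ⬝ᵥ Q *ᵥ u) ≤ δ * |C| := by gcongr
    _ < x₀ ⬝ᵥ P *ᵥ x₀ := hδC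
    _ ≤ u ⬝ᵥ P *ᵥ u := hmin hu

theorem exists_pos_forall_add_smul_sub_sq_smul_pos {B C : Matrix m m ℝ}
    (hB : ∀ x, 0 ≤ x ⬝ᵥ B *ᵥ x) (hBC : ∀ x ≠ 0, 0 < x ⬝ᵥ (B + C) *ᵥ x) (H : Matrix m m ℝ) :
    ∃ δ₀ > 0, ∀ δ, 0 < δ → δ ≤ δ₀ → ∀ x ≠ 0,
      0 < x ⬝ᵥ B *ᵥ x + δ * (x ⬝ᵥ C *ᵥ x) - δ ^ 2 * ((H *ᵥ x) ⬝ᵥ B *ᵥ (H *ᵥ x)) := by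
  obtain ⟨δ₀, hδ₀, hsmall⟩ := exists_pos_forall_smul_dotProduct_mulVec_lt hBC (Hᵀ * (B * H))
  refine ⟨min δ₀ 1, by positivity, fun δ hδ hδle x hx => ?_⟩
  have hlt := hsmall δ hδ.le (hδle.trans (min_le_left _ _)) x hx
  rw [dotProduct_transpose_mul_mulVec, ← mulVec_mulVec, add_mulVec, dotProduct_add] at hlt
  -- the left side is `(1 - δ) q_B(x) + δ (q_{B+C}(x) - δ q_B(H x))`
  nlinarith [mul_pos hδ (sub_pos.2 hlt),
    mul_nonneg (sub_nonneg.2 (hδle.trans (min_le_right δ₀ 1))) (hB x)]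

theorem HasDerivAt.matrix_mulVec {v : ℝ → m → ℝ} {v' : m → ℝ} {s : ℝ}
    (hv : HasDerivAt v v' s) (B : Matrix m m ℝ) :
    HasDerivAt (fun t => B *ᵥ v t) (B *ᵥ v') s :=
  (LinearMap.toContinuousLinearMap (Matrix.mulVecLin B)).hasFDerivAt.comp_hasDerivAt s hv

theorem HasDerivAt.dotProduct {v w : ℝ → m → ℝ} {v' w' : m → ℝ} {s : ℝ}
    (hv : HasDerivAt v v' s) (hw : HasDerivAt w w' s) :
    HasDerivAt (fun t => v t ⬝ᵥ w t) (v' ⬝ᵥ w s + v s ⬝ᵥ w') s := by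
  have h := HasDerivAt.fun_sum (u := Finset.univ) fun i _ =>
    (hasDerivAt_pi.1 hv i).fun_mul (hasDerivAt_pi.1 hw i)
  exact h.congr_deriv Finset.sum_add_distrib

section Flow

variable [DecidableEq m] (M : Matrix m m ℝ)

attribute [local instance] Matrix.linftyOpNormedAddCommGroup Matrix.linftyOpNormedRing
  Matrix.linftyOpNormedAlgebra

theorem hasDerivAt_exp_smul_mulVec (X : m → ℝ) (u : ℝ) :
    HasDerivAt (fun s => NormedSpace.exp (s • M) *ᵥ X)
      (M *ᵥ (NormedSpace.exp (u • M) *ᵥ X)) u := by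
  let applyX : Matrix m m ℝ →ₗ[ℝ] m → ℝ := (LinearMap.applyₗ X).comp Matrix.toLin'.toLinearMap
  rw [Matrix.mulVec_mulVec]
  exact (LinearMap.toContinuousLinearMap applyX).hasFDerivAt.comp_hasDerivAt u
      (hasDerivAt_exp_smul_const' M u)

theorem exp_smul_mulVec_exp_smul_mulVec (a b : ℝ) (X : m → ℝ) :
    NormedSpace.exp (a • M) *ᵥ (NormedSpace.exp (b • M) *ᵥ X)
      = NormedSpace.exp ((a + b) • M) *ᵥ X := by
  rw [mulVec_mulVec, add_smul,
    Matrix.exp_add_of_commute _ _ (((Commute.refl M).smul_left a).smul_right b)]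

theorem continuous_exp_smul_mulVec (X : m → ℝ) :
    Continuous fun u : ℝ => NormedSpace.exp (u • M) *ᵥ X :=
  continuous_iff_continuousAt.2 fun u => (hasDerivAt_exp_smul_mulVec M X u).continuousAt

theorem hasDerivAt_dotProduct_mulVec_exp_smul_mulVec {B : Matrix m m ℝ} (hB : B.IsSymm)
    (X : m → ℝ) :
    HasDerivAt
      (fun s : ℝ => (NormedSpace.exp (s • M) *ᵥ X) ⬝ᵥ B *ᵥ (NormedSpace.exp (s • M) *ᵥ X))
      (2 * ((M *ᵥ X) ⬝ᵥ B *ᵥ X)) 0 := by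
  have hv := hasDerivAt_exp_smul_mulVec M X 0
  simp only [zero_smul, NormedSpace.exp_zero, one_mulVec] at hv
  refine (hv.dotProduct (hv.matrix_mulVec B)).congr_deriv ?_
  simp only [zero_smul, NormedSpace.exp_zero, one_mulVec, hB.dotProduct_mulVec_comm X]
  ring

theorem two_mul_dotProduct_mulVec_eq_integral {T : ℝ} (hT : T ≠ 0) {B G : Matrix m m ℝ}
    (hG : G.IsSymm)
    (hGB : ∀ Y, Y ⬝ᵥ G *ᵥ Y = ∫ t in (0 : ℝ)..T, (1 - t / T) *
      ((NormedSpace.exp ((2 * t) • M) *ᵥ Y) ⬝ᵥ B *ᵥ (NormedSpace.exp ((2 * t) • M) *ᵥ Y)))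
    (X : m → ℝ) :
    2 * ((M *ᵥ X) ⬝ᵥ G *ᵥ X)
      = (∫ u in (0 : ℝ)..2 * T,
          (NormedSpace.exp (u • M) *ᵥ X) ⬝ᵥ B *ᵥ (NormedSpace.exp (u • M) *ᵥ X)) / (4 * T)
        - X ⬝ᵥ B *ᵥ X / 2 := by
  set r : ℝ → ℝ := fun u =>
    (NormedSpace.exp (u • M) *ᵥ X) ⬝ᵥ B *ᵥ (NormedSpace.exp (u • M) *ᵥ X) with hr_def
  have hr : Continuous r := by
    have hv := continuous_exp_smul_mulVec M X
    exact hv.dotProduct (continuous_const.matrix_mulVec hv)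
  have hshift : (fun s : ℝ => (NormedSpace.exp (s • M) *ᵥ X) ⬝ᵥ G *ᵥ (NormedSpace.exp (s • M) *ᵥ X))
      = fun s => ∫ t in (0 : ℝ)..T, (1 - t / T) * r (2 * t + s) := by
    funext s
    simp only [hGB, hr_def, exp_smul_mulVec_exp_smul_mulVec]
  have hderiv := hasDerivAt_dotProduct_mulVec_exp_smul_mulVec M hG X
  rw [hshift] at hderiv
  rw [hderiv.unique (hasDerivAt_integral_one_sub_div_mul_comp_two_mul_add hr hT)]
  simp [hr_def]

theorem mul_mulVec_exp_smul_mulVec_eq_zero {C : Matrix m m ℝ} {X : m → ℝ} {U : Set ℝ}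
    (hU : IsOpen U) (hC : ∀ u ∈ U, C *ᵥ (NormedSpace.exp (u • M) *ᵥ X) = 0) :
    ∀ u ∈ U, (C * M) *ᵥ (NormedSpace.exp (u • M) *ᵥ X) = 0 := by
  intro u hu
  have hconst : HasDerivAt (fun s => C *ᵥ (NormedSpace.exp (s • M) *ᵥ X)) 0 u :=
    (hasDerivAt_const u 0).congr_of_eventuallyEq
      (Filter.eventually_of_mem (hU.mem_nhds hu) hC)
  rw [← mulVec_mulVec]
  exact ((hasDerivAt_exp_smul_mulVec M X u).matrix_mulVec C).unique hconst

theorem mul_pow_mulVec_exp_smul_mulVec_eq_zero {C : Matrix m m ℝ} {X : m → ℝ} {U : Set ℝ}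
    (hU : IsOpen U) (hC : ∀ u ∈ U, C *ᵥ (NormedSpace.exp (u • M) *ᵥ X) = 0) (k : ℕ) :
    ∀ u ∈ U, (C * M ^ k) *ᵥ (NormedSpace.exp (u • M) *ᵥ X) = 0 := by
  induction k with
  | zero => simpa using hC
  | succ k ih => simpa [pow_succ, Matrix.mul_assoc] using mul_mulVec_exp_smul_mulVec_eq_zero M hU ih

theorem integral_dotProduct_mulVec_exp_smul_mulVec_pos {B : Matrix m m ℝ} (hB : B.PosSemidef)
    {K : ℕ} (hker : ∀ Y : m → ℝ, (∀ k ≤ K, (B * M ^ k) *ᵥ Y = 0) → Y = 0)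
    {a b : ℝ} (hab : a < b) {X : m → ℝ} (hX : X ≠ 0) :
    0 < ∫ u in a..b, (NormedSpace.exp (u • M) *ᵥ X) ⬝ᵥ B *ᵥ (NormedSpace.exp (u • M) *ᵥ X) := by
  have hv := continuous_exp_smul_mulVec M X
  refine intervalIntegral.integral_pos hab
    (hv.dotProduct (continuous_const.matrix_mulVec hv)).continuousOn
    (fun u _ => by simpa using hB.dotProduct_mulVec_nonneg (NormedSpace.exp (u • M) *ᵥ X)) ?_
  by_contra! hzero
  have hBzero : ∀ u ∈ Set.Ioo a b, B *ᵥ (NormedSpace.exp (u • M) *ᵥ X) = 0 := fun u hu =>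
    (hB.dotProduct_mulVec_zero_iff _).1 <| by
      simpa using le_antisymm (hzero u (Set.Ioo_subset_Icc_self hu))
        (by simpa using hB.dotProduct_mulVec_nonneg (NormedSpace.exp (u • M) *ᵥ X))
  have hc : (a + b) / 2 ∈ Set.Ioo a b := ⟨by linarith, by linarith⟩
  have hY : NormedSpace.exp (((a + b) / 2) • M) *ᵥ X = 0 := hker _ fun k _ =>
    mul_pow_mulVec_exp_smul_mulVec_eq_zero M isOpen_Ioo hBzero k _ hc
  have hX0 := congrArg (NormedSpace.exp ((-((a + b) / 2)) • M) *ᵥ ·) hY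
  rw [mulVec_zero, exp_smul_mulVec_exp_smul_mulVec, neg_add_cancel, zero_smul,
    NormedSpace.exp_zero, one_mulVec] at hX0
  exact hX hX0

theorem dotProduct_mulVec_add_four_smul_transpose_mul_pos {T : ℝ} (hT : 0 < T)
    {B G : Matrix m m ℝ} (hB : B.PosSemidef)
    {K : ℕ} (hker : ∀ Y : m → ℝ, (∀ k ≤ K, (B * M ^ k) *ᵥ Y = 0) → Y = 0) (hG : G.IsSymm)
    (hGB : ∀ Y, Y ⬝ᵥ G *ᵥ Y = ∫ t in (0 : ℝ)..T, (1 - t / T) *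
      ((NormedSpace.exp ((2 * t) • M) *ᵥ Y) ⬝ᵥ B *ᵥ (NormedSpace.exp ((2 * t) • M) *ᵥ Y)))
    {X : m → ℝ} (hX : X ≠ 0) :
    0 < X ⬝ᵥ (B + (4 : ℝ) • (Mᵀ * G)) *ᵥ X := by
  have hint := integral_dotProduct_mulVec_exp_smul_mulVec_pos M hB hker
    (by linarith : (0 : ℝ) < 2 * T) hX
  have hid := two_mul_dotProduct_mulVec_eq_integral M hT.ne' hG hGB X
  rw [add_mulVec, dotProduct_add, smul_mulVec, dotProduct_smul, smul_eq_mul,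
    dotProduct_transpose_mul_mulVec]
  have := div_pos hint (by linarith : (0 : ℝ) < 4 * T)
  linarith

end Flow

theorem ofReal_dotProduct_mulVec_ofReal (B : Matrix m m ℂ) (x y : m → ℝ) :
    (fun i => (x i : ℂ)) ⬝ᵥ B *ᵥ (fun i => (y i : ℂ))
      = (x ⬝ᵥ B.map Complex.re *ᵥ y : ℝ) + (x ⬝ᵥ B.map Complex.im *ᵥ y : ℝ) * Complex.I := by
  apply Complex.ext <;>
    simp [dotProduct, mulVec, Complex.re_sum, Complex.im_sum, Finset.mul_sum, mul_left_comm]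

theorem re_dotProduct_mulVec_add_I_mul {B : Matrix m m ℂ} (hB : B.IsSymm) (δ : ℝ)
    (x y : m → ℝ) :
    ((fun i => (x i : ℂ) + Complex.I * δ * y i) ⬝ᵥ B *ᵥ
      (fun i => (x i : ℂ) + Complex.I * δ * y i)).re
      = x ⬝ᵥ B.map Complex.re *ᵥ x - 2 * δ * (x ⬝ᵥ B.map Complex.im *ᵥ y)
        - δ ^ 2 * (y ⬝ᵥ B.map Complex.re *ᵥ y) := by
  have hz : (fun i => (x i : ℂ) + Complex.I * δ * y i)
      = (fun i => (x i : ℂ)) + (Complex.I * δ) • fun i => (y i : ℂ) := by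
    ext i; simp [mul_assoc]
  rw [hz, add_dotProduct, mulVec_add, mulVec_smul, dotProduct_add, dotProduct_add,
    smul_dotProduct, smul_dotProduct, dotProduct_smul, dotProduct_smul,
    hB.dotProduct_mulVec_comm (fun i => (y i : ℂ)), ofReal_dotProduct_mulVec_ofReal,
    ofReal_dotProduct_mulVec_ofReal, ofReal_dotProduct_mulVec_ofReal]
  simp only [smul_eq_mul, Complex.add_re, Complex.add_im, Complex.mul_re, Complex.mul_im,
    Complex.ofReal_re, Complex.ofReal_im, Complex.I_re, Complex.I_im]
  ring

theorem re_Qc {d : ℕ} (A : Matrix (Fin d ⊕ Fin d) (Fin d ⊕ Fin d) ℂ) (X : Fin d ⊕ Fin d → ℝ) :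
    (Qc A X).re = X ⬝ᵥ A.map Complex.re *ᵥ X := by
  simp [Qc, ofReal_dotProduct_mulVec_ofReal]

theorem posSemidef_map_re_of_re_Qc_nonneg {d : ℕ} {A : Matrix (Fin d ⊕ Fin d) (Fin d ⊕ Fin d) ℂ}
    (hA : A.IsSymm) (hpos : ∀ X, 0 ≤ (Qc A X).re) : (A.map Complex.re).PosSemidef :=
  .of_dotProduct_mulVec_nonneg (isHermitian_iff_isSymm.2 (hA.map _))
    fun X => by simpa [re_Qc] using hpos X

theorem Jmat_transpose (d : ℕ) (R : Type*) [Ring R] : (Jmat d R)ᵀ = -Jmat d R := by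
  simp [Jmat, fromBlocks_transpose, fromBlocks_neg]

theorem map_ofReal_Jmat (d : ℕ) : (Jmat d ℝ).map Complex.ofReal = Jmat d ℂ := by
  simp [Jmat, fromBlocks_map, Matrix.map_neg, Matrix.map_one]

theorem map_re_neg_Jmat_mul {d : ℕ} (A : Matrix (Fin d ⊕ Fin d) (Fin d ⊕ Fin d) ℂ) :
    (-Jmat d ℂ * A).map Complex.re = -Jmat d ℝ * A.map Complex.re := by
  ext i j
  simp [← map_ofReal_Jmat, mul_apply, Complex.re_sum]

theorem map_im_neg_Jmat_mul {d : ℕ} (A : Matrix (Fin d ⊕ Fin d) (Fin d ⊕ Fin d) ℂ) :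
    (-Jmat d ℂ * A).map Complex.im = -Jmat d ℝ * A.map Complex.im := by
  ext i j
  simp [← map_ofReal_Jmat, mul_apply, Complex.im_sum]

theorem dotProduct_mulVec_Jmat_mul_mulVec {d : ℕ} {S : Matrix (Fin d ⊕ Fin d) (Fin d ⊕ Fin d) ℝ}
    (hS : S.IsSymm) (G : Matrix (Fin d ⊕ Fin d) (Fin d ⊕ Fin d) ℝ) (x : Fin d ⊕ Fin d → ℝ) :
    x ⬝ᵥ S *ᵥ ((Jmat d ℝ * G) *ᵥ x) = ((-Jmat d ℝ * S) *ᵥ x) ⬝ᵥ G *ᵥ x := by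
  rw [dotProduct_mulVec_mul_mulVec_of_transpose_eq_neg (Jmat_transpose d ℝ) hS, neg_mul,
    neg_mulVec, neg_dotProduct]

theorem statement4_general (d : ℕ)
    (A F : Matrix (Fin d ⊕ Fin d) (Fin d ⊕ Fin d) ℂ)
    (hA : A.IsSymm)
    (hF : F = -(Jmat d ℂ) * A)
    (hpos : ∀ X : Fin d ⊕ Fin d → ℝ, 0 ≤ (Qc A X).re)
    (hS : ∀ X : Fin d ⊕ Fin d → ℝ,
      (∀ k : ℕ, k ≤ 2 * d - 1 →
        (F.map Complex.re * (F.map Complex.im) ^ k) *ᵥ X = 0) → X = 0)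
    (T : ℝ) (hT : 0 < T)
    (AG : Matrix (Fin d ⊕ Fin d) (Fin d ⊕ Fin d) ℝ) (hAGsymm : AG.IsSymm)
    (hAG : ∀ X : Fin d ⊕ Fin d → ℝ,
      X ⬝ᵥ AG *ᵥ X =
        ∫ t in (0:ℝ)..T, (1 - t / T) *
          (Qc A (NormedSpace.exp ((2 * t) • F.map Complex.im) *ᵥ X)).re) :
    ∃ δ₀ : ℝ, 0 < δ₀ ∧ ∀ δ : ℝ, 0 < δ → δ ≤ δ₀ →
      ∀ X : Fin d ⊕ Fin d → ℝ, X ≠ 0 →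
        0 < ((fun i => (X i : ℂ) +
                Complex.I * (δ : ℂ) * ((((-2 : ℝ) • (Jmat d ℝ * AG)) *ᵥ X) i : ℂ)) ⬝ᵥ
              A *ᵥ
              (fun i => (X i : ℂ) +
                Complex.I * (δ : ℂ) * ((((-2 : ℝ) • (Jmat d ℝ * AG)) *ᵥ X) i : ℂ))).re := by
  set Ar := A.map Complex.re
  set Fi := F.map Complex.im
  have hFre : F.map Complex.re = -Jmat d ℝ * Ar := by rw [hF, map_re_neg_Jmat_mul]
  have hFim : Fi = -Jmat d ℝ * A.map Complex.im := by
    simp only [Fi]; rw [hF, map_im_neg_Jmat_mul]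
  have hAr : Ar.PosSemidef := posSemidef_map_re_of_re_Qc_nonneg hA hpos
  have hker (Y : Fin d ⊕ Fin d → ℝ) (hY : ∀ k ≤ 2 * d - 1, (Ar * Fi ^ k) *ᵥ Y = 0) : Y = 0 :=
    hS Y fun k hk => by rw [hFre, Matrix.mul_assoc, ← mulVec_mulVec, hY k hk, mulVec_zero]
  have hGB (Y : Fin d ⊕ Fin d → ℝ) : Y ⬝ᵥ AG *ᵥ Y = ∫ t in (0 : ℝ)..T, (1 - t / T) *
      ((NormedSpace.exp ((2 * t) • Fi) *ᵥ Y) ⬝ᵥ Ar *ᵥ (NormedSpace.exp ((2 * t) • Fi) *ᵥ Y)) := by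
    simpa only [re_Qc] using hAG Y
  obtain ⟨δ₀, hδ₀, hδ₀_pos⟩ := exists_pos_forall_add_smul_sub_sq_smul_pos
    (fun Y => by simpa using hAr.dotProduct_mulVec_nonneg Y)
    (fun Y hY => dotProduct_mulVec_add_four_smul_transpose_mul_pos Fi hT hAr hker hAGsymm hGB hY)
    ((-2 : ℝ) • (Jmat d ℝ * AG))
  refine ⟨δ₀, hδ₀, fun δ hδ hδle X hX => ?_⟩
  have hδX := hδ₀_pos δ hδ hδle X hX
  rw [re_dotProduct_mulVec_add_I_mul hA]
  simp only [smul_mulVec, mulVec_smul, dotProduct_smul, smul_dotProduct, smul_eq_mul,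
    dotProduct_transpose_mul_mulVec, dotProduct_mulVec_Jmat_mul_mulVec (hA.map _), ← hFim]
    at hδX ⊢
  linarith

/-- Let `q(X) = ⟨X, A X⟩` have Hamilton map `F = -J A`, `Re q ≥ 0` and
trivial singular space.  Fix `T > 0` and let `G` be the real quadratic form
`G(X) = ∫₀^T (1 - t/T) Re q(exp(2 t Im F) X) dt`, with symmetric matrix `A_G` and
`H_G = 2 F_G = -2 J A_G`.  Then there is `δ₀ > 0` such that for all `0 < δ ≤ δ₀` and all
`X ∈ ℝ^{2d} \ {0}`, evaluating the holomorphic extension of `q` at `X + i δ H_G X` gives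
`Re q(X + i δ H_G X) > 0`. -/
theorem statement4 (d : ℕ) (hd : 0 < d)
    (A F : Matrix (Fin d ⊕ Fin d) (Fin d ⊕ Fin d) ℂ)
    (hA : A.IsSymm)
    (hF : F = -(Jmat d ℂ) * A)
    (hpos : ∀ X : Fin d ⊕ Fin d → ℝ, 0 ≤ (Qc A X).re)
    (hS : ∀ X : Fin d ⊕ Fin d → ℝ,
      (∀ k : ℕ, k ≤ 2 * d - 1 →
        (F.map Complex.re * (F.map Complex.im) ^ k) *ᵥ X = 0) → X = 0)
    (T : ℝ) (hT : 0 < T)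
    (AG : Matrix (Fin d ⊕ Fin d) (Fin d ⊕ Fin d) ℝ) (hAGsymm : AG.IsSymm)
    (hAG : ∀ X : Fin d ⊕ Fin d → ℝ,
      X ⬝ᵥ AG *ᵥ X =
        ∫ t in (0:ℝ)..T, (1 - t / T) *
          (Qc A (NormedSpace.exp ((2 * t) • F.map Complex.im) *ᵥ X)).re) :
    ∃ δ₀ : ℝ, 0 < δ₀ ∧ ∀ δ : ℝ, 0 < δ → δ ≤ δ₀ →
      ∀ X : Fin d ⊕ Fin d → ℝ, X ≠ 0 →
        0 < ((fun i => (X i : ℂ) +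
                Complex.I * (δ : ℂ) * ((((-2 : ℝ) • (Jmat d ℝ * AG)) *ᵥ X) i : ℂ)) ⬝ᵥ
              A *ᵥ
              (fun i => (X i : ℂ) +
                Complex.I * (δ : ℂ) * ((((-2 : ℝ) • (Jmat d ℝ * AG)) *ᵥ X) i : ℂ))).re :=
  statement4_general d A F hA hF hpos hS T hT AG hAGsymm hAG
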